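/- Let a < b be real numbers, let (u_i)_{i∈ℕ} be an orthonormal family in L²([a,b]), and let (λ_i)_{i∈ℕ} be real numbers with λ_1 ≥ λ_2 ≥ λ_3 ≥ ... ≥ 0 and Σ_i λ_i² < ∞. Let k ∈ L²([a,b]×[a,b]) be the sum of the L²-convergent series Σ_i λ_i u_i ⊗ u_i. Then for every m ∈ ℕ and every choice of functions g_1, ..., g_m ∈ L²([a,b]), one has ‖k − Σ_{j=1}^m g_j ⊗ g_j‖_{L²([a,b]×[a,b])} ≥ ‖k − Σ_{i=1}^m λ_i u_i ⊗ u_i‖_{L²([a,b]×[a,b])} = (Σ_{i=m+1}^∞ λ_i²)^{1/2}; that is, the truncated eigenfunction expansion is the L²-optimal rank-m symmetric approximation to k. -/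

import Mathlib

/-!
Let `F` be the span of the `gⱼ` and `dᵢ` the component of `uᵢ` orthogonal to `F`. The vectors
`dᵢ ⊗ uᵢ` are pairwise orthogonal, orthogonal to every `gⱼ ⊗ gⱼ`, and `⟪dᵢ ⊗ uᵢ, k⟫ = λᵢ ‖dᵢ‖²`,
so Bessel's inequality gives `∑ λᵢ² ‖dᵢ‖² ≤ ‖k - ∑ gⱼ ⊗ gⱼ‖²`. Now `‖dᵢ‖² = 1 - pᵢ` with
`pᵢ = ‖P_F uᵢ‖² ∈ [0, 1]` and `∑ pᵢ ≤ dim F ≤ m`; as `λᵢ²` decreases, the left side is at least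
`∑_{i ≥ m} λᵢ²`, the squared norm of `k - ∑_{i < m} λᵢ uᵢ ⊗ uᵢ`.

The argument uses only `⟪x ⊗ y, x' ⊗ y'⟫ = ⟪x, x'⟫ ⟪y, y'⟫`, so it applies to any map
`t : E → E → K` between real inner product spaces with this property.
-/

open MeasureTheory Finset
open scoped RealInnerProductSpace

theorem Antitone.sum_range_add_le_sum_mul_one_sub {s p : ℕ → ℝ} {m N : ℕ} (hs : Antitone s)
    (hs0 : 0 ≤ s m) (hp0 : ∀ i, 0 ≤ p i) (hp1 : ∀ i, p i ≤ 1)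
    (hp : ∑ i ∈ range (m + N), p i ≤ m) :
    ∑ i ∈ range N, s (m + i) ≤ ∑ i ∈ range (m + N), s i * (1 - p i) := by
  rw [sum_range_add] at hp ⊢
  have head : s m * ∑ i ∈ range m, (1 - p i) ≤ ∑ i ∈ range m, s i * (1 - p i) := by
    rw [mul_sum]
    gcongr with i hi
    · linarith [hp1 i]
    · exact hs (mem_range.mp hi).le
  have hcount : ∑ i ∈ range N, p (m + i) ≤ ∑ i ∈ range m, (1 - p i) := by
    rw [sum_sub_distrib, sum_const, card_range, nsmul_one]
    linarith
  calc ∑ i ∈ range N, s (m + i)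
      = ∑ i ∈ range N, s (m + i) * (1 - p (m + i)) + ∑ i ∈ range N, s (m + i) * p (m + i) := by
        rw [← sum_add_distrib]
        exact sum_congr rfl fun i _ => by ring
    _ ≤ ∑ i ∈ range N, s (m + i) * (1 - p (m + i)) + s m * ∑ i ∈ range N, p (m + i) := by
        rw [mul_sum]
        gcongr with i
        · exact hp0 _
        · exact hs (Nat.le_add_right m i)
    _ ≤ ∑ i ∈ range N, s (m + i) * (1 - p (m + i)) + ∑ i ∈ range m, s i * (1 - p i) := by
        gcongr
        exact (mul_le_mul_of_nonneg_left hcount hs0).trans head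
    _ = _ := add_comm _ _

section Bessel

variable {E : Type*} [NormedAddCommGroup E] [InnerProductSpace ℝ E] {ι : Type*}

theorem sum_sq_mul_norm_sq_le_of_inner_eq {x : ι → E} {a : ι → ℝ} {y : E}
    (hx : Pairwise fun i j => ⟪x i, x j⟫ = 0) (hy : ∀ i, ⟪x i, y⟫ = a i * ‖x i‖ ^ 2)
    (S : Finset ι) : ∑ i ∈ S, a i ^ 2 * ‖x i‖ ^ 2 ≤ ‖y‖ ^ 2 := by
  classical
  -- `z` is the orthogonal projection of `y` onto the span of the `x i` (`i ∈ S`),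
  -- so `⟪z, y⟫ = ‖z‖ ^ 2`.
  set z := ∑ i ∈ S, a i • x i
  have hxz : ∀ i ∈ S, ⟪x i, z⟫ = a i * ‖x i‖ ^ 2 := by
    intro i hi
    rw [inner_sum, sum_eq_single_of_mem i hi fun j _ hji => by
      rw [inner_smul_right, hx hji.symm, mul_zero], inner_smul_right, real_inner_self_eq_norm_sq]
  have hzy : ⟪z, y⟫ = ∑ i ∈ S, a i ^ 2 * ‖x i‖ ^ 2 := by
    simp only [z, sum_inner, inner_smul_left, hy, conj_trivial]
    exact sum_congr rfl fun i _ => by ring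
  have hzz : ‖z‖ ^ 2 = ∑ i ∈ S, a i ^ 2 * ‖x i‖ ^ 2 := by
    rw [← real_inner_self_eq_norm_sq, show ⟪z, z⟫ = ∑ i ∈ S, a i * ⟪x i, z⟫ by
      simp only [z, sum_inner, inner_smul_left, conj_trivial]]
    exact sum_congr rfl fun i hi => by rw [hxz i hi]; ring
  have hcs : ⟪z, y⟫ ≤ ‖z‖ * ‖y‖ := real_inner_le_norm z y
  rw [← hzz] at hzy ⊢
  nlinarith [norm_nonneg z, norm_nonneg y]

theorem Orthonormal.sum_norm_starProjection_sq_le_finrank {u : ι → E} (hu : Orthonormal ℝ u)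
    (F : Submodule ℝ E) [FiniteDimensional ℝ F] (S : Finset ι) :
    ∑ i ∈ S, ‖F.starProjection (u i)‖ ^ 2 ≤ Module.finrank ℝ F := by
  let e := stdOrthonormalBasis ℝ F
  have hproj : ∀ i, ‖F.starProjection (u i)‖ ^ 2 = ∑ s, ‖⟪u i, (e s : E)⟫‖ ^ 2 := fun i => by
    change ‖F.orthogonalProjectionOnto (u i)‖ ^ 2 = _
    rw [← e.sum_sq_norm_inner_left]
    simp
  calc ∑ i ∈ S, ‖F.starProjection (u i)‖ ^ 2 = ∑ i ∈ S, ∑ s, ‖⟪u i, (e s : E)⟫‖ ^ 2 :=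
        sum_congr rfl fun i _ => hproj i
    _ = ∑ s, ∑ i ∈ S, ‖⟪u i, (e s : E)⟫‖ ^ 2 := sum_comm
    _ ≤ ∑ s, ‖(e s : E)‖ ^ 2 := sum_le_sum fun s _ => hu.sum_inner_products_le _
    _ = Module.finrank ℝ F := by
        simp [Submodule.norm_coe, e.norm_eq_one]

theorem Orthonormal.hasSum_sq_of_hasSum_smul {w : ι → E} (hw : Orthonormal ℝ w) {c : ι → ℝ}
    {k : E} (hk : HasSum (fun i => c i • w i) k) : HasSum (fun i => c i ^ 2) (‖k‖ ^ 2) := by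
  classical
  have hcoeff : ∀ i, ⟪k, w i⟫ = c i := fun i => by
    have := (innerSL ℝ (w i)).hasSum hk
    simp only [innerSL_apply_apply, inner_smul_right, orthonormal_iff_ite.mp hw, mul_ite, mul_one,
      mul_zero] at this
    rw [real_inner_comm]
    simpa using this.unique (hasSum_single i fun j hj => if_neg (Ne.symm hj))
  simpa [hcoeff, sq, real_inner_self_eq_norm_sq] using (innerSL ℝ k).hasSum hk

theorem Orthonormal.hasSum_sq_norm_sub_sum_range {w : ℕ → E} (hw : Orthonormal ℝ w) {c : ℕ → ℝ}
    {k : E} (hk : HasSum (fun i => c i • w i) k) (m : ℕ) :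
    HasSum (fun i => c (m + i) ^ 2) (‖k - ∑ i ∈ range m, c i • w i‖ ^ 2) := by
  have htail := (hasSum_nat_add_iff' m).mpr hk
  simpa only [add_comm] using (hw.comp _ (add_left_injective m)).hasSum_sq_of_hasSum_smul htail

end Bessel

section TensorEmbedding

variable {E K : Type*} [NormedAddCommGroup E] [InnerProductSpace ℝ E]
  [NormedAddCommGroup K] [InnerProductSpace ℝ K] {t : E → E → K}
  (ht : ∀ x y x' y', ⟪t x y, t x' y'⟫ = ⟪x, x'⟫ * ⟪y, y'⟫)
include ht

theorem Orthonormal.diag_of_inner_eq_mul {ι : Type*} {u : ι → E} (hu : Orthonormal ℝ u) :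
    Orthonormal ℝ fun i => t (u i) (u i) := by
  classical
  rw [orthonormal_iff_ite] at hu ⊢
  intro i j
  rw [ht, hu]
  split_ifs <;> simp

variable {ι : Type*} {u : ι → E} {l : ι → ℝ} {k : K}

theorem hasSum_inner_of_hasSum_diag (hk : HasSum (fun i => l i • t (u i) (u i)) k) (x y : E) :
    HasSum (fun i => l i * (⟪x, u i⟫ * ⟪y, u i⟫)) ⟪t x y, k⟫ := by
  simpa [inner_smul_right, ht] using (innerSL ℝ (t x y)).hasSum hk

theorem sum_sq_mul_norm_starProjection_orthogonal_sq_le (hu : Orthonormal ℝ u)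
    (hk : HasSum (fun i => l i • t (u i) (u i)) k) {κ : Type*} [Fintype κ] {g : κ → E}
    (F : Submodule ℝ E) [F.HasOrthogonalProjection] (hg : ∀ j, g j ∈ F) (S : Finset ι) :
    ∑ i ∈ S, l i ^ 2 * ‖Fᗮ.starProjection (u i)‖ ^ 2 ≤ ‖k - ∑ j, t (g j) (g j)‖ ^ 2 := by
  classical
  set d := fun i => Fᗮ.starProjection (u i)
  have hdg : ∀ i j, ⟪d i, g j⟫ = 0 := fun i j =>
    F.inner_left_of_mem_orthogonal (hg j) (Fᗮ.starProjection_apply_mem _)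
  have hdu : ∀ i, ⟪d i, u i⟫ = ‖d i‖ ^ 2 := fun i =>
    Fᗮ.re_inner_starProjection_eq_normSq (u i)
  have hnorm : ∀ i, ‖t (d i) (u i)‖ ^ 2 = ‖d i‖ ^ 2 := fun i => by
    rw [← real_inner_self_eq_norm_sq, ht, real_inner_self_eq_norm_sq, real_inner_self_eq_norm_sq,
      hu.1 i]
    ring
  have horth : Pairwise fun i j => ⟪t (d i) (u i), t (d j) (u j)⟫ = 0 := fun i j hij =>
    (ht _ _ _ _).trans (by rw [hu.2 hij, mul_zero])
  have hk_coeff : ∀ i, ⟪t (d i) (u i), k⟫ = l i * ‖d i‖ ^ 2 := fun i => by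
    refine (hasSum_inner_of_hasSum_diag ht hk _ _).unique ?_
    rw [← hdu]
    convert hasSum_single (f := fun n => l n * (⟪d i, u n⟫ * ⟪u i, u n⟫)) i fun n hn => by
      rw [hu.2 hn.symm, mul_zero, mul_zero] using 1
    rw [real_inner_self_eq_norm_sq, hu.1 i]
    ring
  have hy : ∀ i, ⟪t (d i) (u i), k - ∑ j, t (g j) (g j)⟫ = l i * ‖t (d i) (u i)‖ ^ 2 := fun i => by
    simp [inner_sub_right, inner_sum, ht, hdg, hk_coeff, hnorm]
  simpa only [hnorm] using sum_sq_mul_norm_sq_le_of_inner_eq horth hy S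

theorem sum_range_sq_le_norm_sub_sum_sq {u : ℕ → E} {l : ℕ → ℝ} (hu : Orthonormal ℝ u)
    (hl : Antitone l) (hl0 : ∀ i, 0 ≤ l i) (hk : HasSum (fun i => l i • t (u i) (u i)) k)
    {κ : Type*} [Fintype κ] (g : κ → E) (N : ℕ) :
    ∑ i ∈ range N, l (Fintype.card κ + i) ^ 2 ≤ ‖k - ∑ j, t (g j) (g j)‖ ^ 2 := by
  set F := Submodule.span ℝ (Set.range g)
  have : FiniteDimensional ℝ F := FiniteDimensional.span_of_finite ℝ (Set.finite_range g)
  have hrank : Module.finrank ℝ F ≤ Fintype.card κ := finrank_range_le_card g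
  have hpyth : ∀ i, ‖Fᗮ.starProjection (u i)‖ ^ 2 = 1 - ‖F.starProjection (u i)‖ ^ 2 := fun i => by
    have h := F.norm_sq_eq_add_norm_sq_starProjection (u i)
    rw [hu.1 i, one_pow] at h
    linarith
  have hsq : Antitone fun i => l i ^ 2 := fun i j hij => pow_le_pow_left₀ (hl0 j) (hl hij) 2
  calc ∑ i ∈ range N, l (Fintype.card κ + i) ^ 2
      ≤ ∑ i ∈ range (Fintype.card κ + N), l i ^ 2 * (1 - ‖F.starProjection (u i)‖ ^ 2) := by
        refine hsq.sum_range_add_le_sum_mul_one_sub (sq_nonneg _) (fun _ => sq_nonneg _)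
          (fun i => by linarith [hpyth i, sq_nonneg ‖Fᗮ.starProjection (u i)‖]) ?_
        exact (hu.sum_norm_starProjection_sq_le_finrank F _).trans (by exact_mod_cast hrank)
    _ = ∑ i ∈ range (Fintype.card κ + N), l i ^ 2 * ‖Fᗮ.starProjection (u i)‖ ^ 2 := by
        simp only [hpyth]
    _ ≤ ‖k - ∑ j, t (g j) (g j)‖ ^ 2 :=
        sum_sq_mul_norm_starProjection_orthogonal_sq_le ht hu hk F
          (fun j => Submodule.subset_span (Set.mem_range_self j)) _

theorem norm_sub_sum_range_le_norm_sub_sum {u : ℕ → E} {l : ℕ → ℝ} (hu : Orthonormal ℝ u)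
    (hl : Antitone l) (hl0 : ∀ i, 0 ≤ l i) (hk : HasSum (fun i => l i • t (u i) (u i)) k)
    {κ : Type*} [Fintype κ] (g : κ → E) :
    ‖k - ∑ i ∈ range (Fintype.card κ), l i • t (u i) (u i)‖ ≤ ‖k - ∑ j, t (g j) (g j)‖ := by
  have htail := (hu.diag_of_inner_eq_mul ht).hasSum_sq_norm_sub_sum_range hk (Fintype.card κ)
  rw [← pow_le_pow_iff_left₀ (norm_nonneg _) (norm_nonneg _) two_ne_zero, ← htail.tsum_eq]
  exact Real.tsum_le_of_sum_range_le (fun _ => sq_nonneg _)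
    (sum_range_sq_le_norm_sub_sum_sq ht hu hl hl0 hk g)

end TensorEmbedding

namespace MeasureTheory.L2

variable {α β : Type*} [MeasurableSpace α] [MeasurableSpace β] {μ : Measure α} {ν : Measure β}

theorem memLp_two_mul_prod (p : Lp ℝ 2 μ) (q : Lp ℝ 2 ν) :
    MemLp (fun z : α × β => p z.1 * q z.2) 2 (μ.prod ν) := by
  have hmeas : AEStronglyMeasurable (fun z : α × β => p z.1 * q z.2) (μ.prod ν) :=
    (Lp.aestronglyMeasurable p).comp_fst.mul (Lp.aestronglyMeasurable q).comp_snd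
  rw [memLp_two_iff_integrable_sq hmeas]
  simpa only [mul_pow] using (Lp.memLp p).integrable_sq.mul_prod (Lp.memLp q).integrable_sq

noncomputable def tensor (p : Lp ℝ 2 μ) (q : Lp ℝ 2 ν) : Lp ℝ 2 (μ.prod ν) :=
  (memLp_two_mul_prod p q).toLp _

theorem coeFn_tensor (p : Lp ℝ 2 μ) (q : Lp ℝ 2 ν) :
    tensor p q =ᵐ[μ.prod ν] fun z => p z.1 * q z.2 :=
  MemLp.coeFn_toLp _

theorem inner_tensor_tensor [SFinite μ] [SFinite ν] (p : Lp ℝ 2 μ) (q : Lp ℝ 2 ν)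
    (p' : Lp ℝ 2 μ) (q' : Lp ℝ 2 ν) :
    ⟪tensor p q, tensor p' q'⟫ = ⟪p, p'⟫ * ⟪q, q'⟫ := by
  simp only [inner_def, RCLike.inner_apply, conj_trivial]
  rw [← integral_prod_mul]
  refine integral_congr_ae ?_
  filter_upwards [coeFn_tensor p q, coeFn_tensor p' q'] with z hz hz'
  rw [hz, hz']
  ring

end MeasureTheory.L2

theorem stmt5_general
    (a b : ℝ)
    (u : ℕ → Lp ℝ 2 (volume.restrict (Set.Icc a b)))
    (hu : Orthonormal ℝ u)
    (l : ℕ → ℝ) (hmono : Antitone l) (hpos : ∀ i, 0 ≤ l i)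
    (w : ℕ → Lp ℝ 2 ((volume.restrict (Set.Icc a b)).prod (volume.restrict (Set.Icc a b))))
    (hw : ∀ i : ℕ,
      (w i : ℝ × ℝ → ℝ)
        =ᵐ[(volume.restrict (Set.Icc a b)).prod (volume.restrict (Set.Icc a b))]
      fun p : ℝ × ℝ => (u i : ℝ → ℝ) p.1 * (u i : ℝ → ℝ) p.2)
    (k : Lp ℝ 2 ((volume.restrict (Set.Icc a b)).prod (volume.restrict (Set.Icc a b))))
    (hk : HasSum (fun i => l i • w i) k)
    (m : ℕ)
    (g : Fin m → Lp ℝ 2 (volume.restrict (Set.Icc a b)))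
    (G : Fin m → Lp ℝ 2 ((volume.restrict (Set.Icc a b)).prod (volume.restrict (Set.Icc a b))))
    (hG : ∀ j : Fin m,
      (G j : ℝ × ℝ → ℝ)
        =ᵐ[(volume.restrict (Set.Icc a b)).prod (volume.restrict (Set.Icc a b))]
      fun p : ℝ × ℝ => (g j : ℝ → ℝ) p.1 * (g j : ℝ → ℝ) p.2) :
    ‖k - ∑ j : Fin m, G j‖ ≥ ‖k - ∑ i ∈ Finset.range m, l i • w i‖ ∧
    ‖k - ∑ i ∈ Finset.range m, l i • w i‖ = Real.sqrt (∑' i : ℕ, (l (m + i)) ^ 2) := by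
  obtain rfl : w = fun i => L2.tensor (u i) (u i) :=
    funext fun i => Lp.ext ((hw i).trans (L2.coeFn_tensor _ _).symm)
  obtain rfl : G = fun j => L2.tensor (g j) (g j) :=
    funext fun j => Lp.ext ((hG j).trans (L2.coeFn_tensor _ _).symm)
  have htail := (hu.diag_of_inner_eq_mul L2.inner_tensor_tensor).hasSum_sq_norm_sub_sum_range hk m
  refine ⟨?_, ?_⟩
  · simpa using norm_sub_sum_range_le_norm_sub_sum L2.inner_tensor_tensor hu hmono hpos hk g
  · rw [htail.tsum_eq]
    exact (Real.sqrt_sq (norm_nonneg _)).symm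

/-- With `(u i)` orthonormal in `L²([a,b])`, `(λ i)` nonincreasing, nonnegative and
square-summable, and `k` the `L²`-convergent sum `∑ i, λ i • (u i ⊗ u i)`, the truncated
eigenfunction expansion is the `L²`-optimal rank-`m` symmetric approximation to `k`: for any
`g 1, ..., g m ∈ L²([a,b])`,
`‖k − ∑ j, g j ⊗ g j‖ ≥ ‖k − ∑_{i<m} λ i • (u i ⊗ u i)‖ = (∑_{i ≥ m} (λ i)²)^{1/2}`. -/
theorem stmt5
    (a b : ℝ) (hab : a < b)
    (u : ℕ → Lp ℝ 2 (volume.restrict (Set.Icc a b)))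
    (hu : Orthonormal ℝ u)
    (l : ℕ → ℝ) (hmono : Antitone l) (hpos : ∀ i, 0 ≤ l i)
    (hl : Summable fun i => (l i) ^ 2)
    (w : ℕ → Lp ℝ 2 ((volume.restrict (Set.Icc a b)).prod (volume.restrict (Set.Icc a b))))
    (hw : ∀ i : ℕ,
      (w i : ℝ × ℝ → ℝ)
        =ᵐ[(volume.restrict (Set.Icc a b)).prod (volume.restrict (Set.Icc a b))]
      fun p : ℝ × ℝ => (u i : ℝ → ℝ) p.1 * (u i : ℝ → ℝ) p.2)
    (k : Lp ℝ 2 ((volume.restrict (Set.Icc a b)).prod (volume.restrict (Set.Icc a b))))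
    (hk : HasSum (fun i => l i • w i) k)
    (m : ℕ)
    (g : Fin m → Lp ℝ 2 (volume.restrict (Set.Icc a b)))
    (G : Fin m → Lp ℝ 2 ((volume.restrict (Set.Icc a b)).prod (volume.restrict (Set.Icc a b))))
    (hG : ∀ j : Fin m,
      (G j : ℝ × ℝ → ℝ)
        =ᵐ[(volume.restrict (Set.Icc a b)).prod (volume.restrict (Set.Icc a b))]
      fun p : ℝ × ℝ => (g j : ℝ → ℝ) p.1 * (g j : ℝ → ℝ) p.2) :
    ‖k - ∑ j : Fin m, G j‖ ≥ ‖k - ∑ i ∈ Finset.range m, l i • w i‖ ∧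
    ‖k - ∑ i ∈ Finset.range m, l i • w i‖ = Real.sqrt (∑' i : ℕ, (l (m + i)) ^ 2) :=
  stmt5_general a b u hu l hmono hpos w hw k hk m g G hG
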